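/- Fix q̂ ∈ (0,1). The function y ↦ M(3/2 − y·i) is strictly decreasing on the interval [√3/2, 2/q̂). -/

import Mathlib

/-!
Along `w = 3/2 − y·i` all three moduli are square roots of affine functions of `t = y²`, so
`2·M(3/2 − y·i)` is a sum of logarithms of affine functions of `t`. Its `t`-derivative is
`1/A − q̂²/B − ((1+q̂)/(1−q̂))/C` with `A = |w − q̂|²`, `B = |1 − q̂w|²`, `C = |w|²`, and this is
negative because `(1+q̂)A − (1−q̂)C = q̂((1−q̂)² + 1/2 + 2t) > 0`.
-/

open Complex

/-- The real part of the steepest-descent phase function `h₀` of half-space geometric LPP: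
`M(w) = log|1−q̂/w| − log|1−q̂w| − (2q̂/(1−q̂))·log|w|`. -/
noncomputable def phaseRe (qh : ℝ) (w : ℂ) : ℝ :=
  Real.log (‖1 - (qh : ℂ) / w‖) - Real.log (‖1 - (qh : ℂ) * w‖) -
    (2 * qh / (1 - qh)) * Real.log (‖w‖)

open Set

lemma two_mul_log_norm (z : ℂ) : 2 * Real.log ‖z‖ = Real.log (normSq z) := by
  rw [← Complex.sq_norm, Real.log_pow, Nat.cast_ofNat]

lemma phaseRe_eq {qh : ℝ} (hq : qh ≠ 1) {w : ℂ} (hw : w ≠ 0) (hwq : w ≠ qh) :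
    phaseRe qh w =
      Real.log ‖w - qh‖ - Real.log ‖1 - qh * w‖ - (1 + qh) / (1 - qh) * Real.log ‖w‖ := by
  have hq' : 1 - qh ≠ 0 := sub_ne_zero.mpr hq.symm
  have hdiv : 1 - (qh : ℂ) / w = (w - qh) / w := by field_simp
  rw [phaseRe, hdiv, norm_div, Real.log_div (norm_ne_zero_iff.mpr (sub_ne_zero.mpr hwq))
    (norm_ne_zero_iff.mpr hw)]
  field_simp
  ring

noncomputable def tau2Phase (qh t : ℝ) : ℝ :=
  Real.log ((3 / 2 - qh) ^ 2 + t) - Real.log ((1 - 3 / 2 * qh) ^ 2 + qh ^ 2 * t) -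
    (1 + qh) / (1 - qh) * Real.log (9 / 4 + t)

lemma two_mul_phaseRe_tau2 {qh : ℝ} (hq : qh ≠ 1) {y : ℝ} (hy : y ≠ 0) :
    2 * phaseRe qh (3 / 2 - y * I) = tau2Phase qh (y ^ 2) := by
  have hw : (3 / 2 - y * I : ℂ) ≠ 0 := fun h => by
    simpa using congrArg Complex.re h
  have hwq : (3 / 2 - y * I : ℂ) ≠ qh := fun h => hy <| by
    simpa using congrArg Complex.im h
  have hA : normSq (3 / 2 - y * I - qh) = (3 / 2 - qh) ^ 2 + y ^ 2 := by
    rw [show (3 / 2 - y * I - qh : ℂ) = ↑(3 / 2 - qh) + ↑(-y) * I by push_cast; ring,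
      normSq_add_mul_I, neg_sq]
  have hB : normSq (1 - qh * (3 / 2 - y * I)) = (1 - 3 / 2 * qh) ^ 2 + qh ^ 2 * y ^ 2 := by
    rw [show (1 - qh * (3 / 2 - y * I) : ℂ) = ↑(1 - 3 / 2 * qh) + ↑(qh * y) * I by
      push_cast; ring, normSq_add_mul_I, mul_pow]
  have hC : normSq (3 / 2 - y * I) = 9 / 4 + y ^ 2 := by
    rw [show (3 / 2 - y * I : ℂ) = ↑(3 / 2 : ℝ) + ↑(-y) * I by push_cast; ring,
      normSq_add_mul_I, neg_sq]
    norm_num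
  rw [phaseRe_eq hq hw hwq, tau2Phase, ← hA, ← hB, ← hC, ← two_mul_log_norm,
    ← two_mul_log_norm, ← two_mul_log_norm]
  ring

lemma hasDerivAt_log_affine {a b t : ℝ} (h : a + b * t ≠ 0) :
    HasDerivAt (fun s => Real.log (a + b * s)) (b / (a + b * t)) t := by
  simpa using (((hasDerivAt_id t).const_mul b).const_add a).log h

lemma hasDerivAt_tau2Phase {qh t : ℝ} (hq : qh ≠ 0) (ht : 0 < t) :
    HasDerivAt (tau2Phase qh)
      (1 / ((3 / 2 - qh) ^ 2 + t) - qh ^ 2 / ((1 - 3 / 2 * qh) ^ 2 + qh ^ 2 * t) -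
        (1 + qh) / (1 - qh) * (1 / (9 / 4 + t))) t := by
  have hA := hasDerivAt_log_affine (a := (3 / 2 - qh) ^ 2) (b := 1) (t := t) (by positivity)
  have hB := hasDerivAt_log_affine (a := (1 - 3 / 2 * qh) ^ 2) (b := qh ^ 2) (t := t)
    (by positivity)
  have hC := hasDerivAt_log_affine (a := 9 / 4) (b := 1) (t := t) (by positivity)
  simp only [one_mul] at hA hC
  exact (hA.sub hB).sub (hC.const_mul _)

lemma tau2Phase_deriv_neg {qh t : ℝ} (hq0 : 0 < qh) (hq1 : qh < 1) (ht : 0 < t) :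
    1 / ((3 / 2 - qh) ^ 2 + t) - qh ^ 2 / ((1 - 3 / 2 * qh) ^ 2 + qh ^ 2 * t) -
      (1 + qh) / (1 - qh) * (1 / (9 / 4 + t)) < 0 := by
  have hgap : (1 + qh) * ((3 / 2 - qh) ^ 2 + t) - (1 - qh) * (9 / 4 + t) =
      qh * ((1 - qh) ^ 2 + 1 / 2 + 2 * t) := by ring
  have hAC : 1 / ((3 / 2 - qh) ^ 2 + t) < (1 + qh) / (1 - qh) * (1 / (9 / 4 + t)) := by
    rw [mul_one_div, div_div, div_lt_div_iff₀ (by positivity)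
      (mul_pos (sub_pos.mpr hq1) (by positivity))]
    linarith [mul_pos hq0 (by positivity : 0 < (1 - qh) ^ 2 + 1 / 2 + 2 * t)]
  have hB : 0 < qh ^ 2 / ((1 - 3 / 2 * qh) ^ 2 + qh ^ 2 * t) := by positivity
  linarith

lemma tau2Phase_strictAntiOn {qh : ℝ} (hq0 : 0 < qh) (hq1 : qh < 1) :
    StrictAntiOn (tau2Phase qh) (Ioi 0) := by
  refine strictAntiOn_of_deriv_neg (convex_Ioi 0)
    (fun t ht => (hasDerivAt_tau2Phase hq0.ne' ht).continuousAt.continuousWithinAt) ?_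
  rw [interior_Ioi]
  intro t ht
  rw [(hasDerivAt_tau2Phase hq0.ne' ht).deriv]
  exact tau2Phase_deriv_neg hq0 hq1 ht

lemma phaseRe_tau2_strictAntiOn {qh : ℝ} (hq0 : 0 < qh) (hq1 : qh < 1) :
    StrictAntiOn (fun y : ℝ => phaseRe qh (3 / 2 - (y : ℂ) * I)) (Ioi 0) := by
  intro x hx y hy hxy
  have hsq : tau2Phase qh (y ^ 2) < tau2Phase qh (x ^ 2) :=
    tau2Phase_strictAntiOn hq0 hq1 (mem_Ioi.mpr (pow_pos hx 2)) (mem_Ioi.mpr (pow_pos hy 2))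
      (pow_lt_pow_left₀ hxy (le_of_lt hx) two_ne_zero)
  rw [← two_mul_phaseRe_tau2 hq1.ne (ne_of_gt hx), ← two_mul_phaseRe_tau2 hq1.ne (ne_of_gt hy)]
    at hsq
  linarith

/-- **Steepest descent along the vertical segment `τ₂`.** The map
`y ↦ M(3/2 − y·i)` is strictly decreasing on `[√3/2, 2/q̂)`. -/
theorem phaseRe_strictAntiOn_tau2 (qh : ℝ) (hq : qh ∈ Set.Ioo (0 : ℝ) 1) :
    StrictAntiOn (fun y : ℝ => phaseRe qh (3 / 2 - (y : ℂ) * Complex.I))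
      (Set.Ico (Real.sqrt 3 / 2) (2 / qh)) :=
  (phaseRe_tau2_strictAntiOn hq.1 hq.2).mono fun _ hy =>
    (by positivity : (0 : ℝ) < Real.sqrt 3 / 2).trans_le hy.1
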